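/- Let y ∈ Sp_𝒞(G), i.e., y lies in the convex hull of characteristic vectors of Gao-trees for the chain V_0 ⊊ V_1 ⊊ … ⊊ V_k. Then for every i = 1,…,k: y(δ(L_i)) = 2, y(E(L_i)) = |L_i| − 1, and Σ_{v∈L_i} y(δ(v)) = 2|L_i|. -/

import Mathlib

open Finset
open scoped Classical

variable {V : Type*} [Fintype V]

/-- The set of edges of `G` with one endpoint in `S₁` and the other in `S₂`. -/
noncomputable def cutBetween (G : SimpleGraph V) (S₁ S₂ : Finset V) : Finset (Sym2 V) :=
  G.edgeFinset.filter (fun e => ∃ u v, e = s(u, v) ∧ u ∈ S₁ ∧ v ∈ S₂)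

/-- The cut `δ(S)`: edges of `G` with exactly one endpoint in `S`. -/
noncomputable def cut (G : SimpleGraph V) (S : Finset V) : Finset (Sym2 V) :=
  cutBetween G S Sᶜ

/-- `E(S)`: edges of `G` with both endpoints in `S`. -/
noncomputable def inducedEdges (G : SimpleGraph V) (S : Finset V) : Finset (Sym2 V) :=
  G.edgeFinset.filter (fun e => ∀ v ∈ e, v ∈ S)

/-- `T` is the edge set of a spanning tree of `G`. -/
def IsSpanningTree (G : SimpleGraph V) (T : Finset (Sym2 V)) : Prop :=
  (T : Set (Sym2 V)) ⊆ G.edgeSet ∧ (SimpleGraph.fromEdgeSet (T : Set (Sym2 V))).IsTree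

/-- Characteristic vector of a set of edges. -/
noncomputable def chi (T : Finset (Sym2 V)) : Sym2 V → ℝ :=
  fun e => if e ∈ T then 1 else 0

/-- The spanning tree polytope `Sp(G)`. -/
noncomputable def spanningTreePolytope (G : SimpleGraph V) : Set (Sym2 V → ℝ) :=
  convexHull ℝ {x | ∃ T : Finset (Sym2 V), IsSpanningTree G T ∧ x = chi T}

/-- The level sets `L_i = V_i \ V_{i-1}` of a chain `V_0 ⊊ … ⊊ V_k` (with `V_{-1} = ∅`,
`V_{k+1} = V`). -/
noncomputable def level (Vc : ℕ → Finset V) (k : ℕ) : ℕ → Finset V :=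
  fun i => if i = 0 then Vc 0 else if i ≤ k then Vc i \ Vc (i - 1) else Finset.univ \ Vc k

/-- `x` is a chain-point for the chain `V_0 ⊊ … ⊊ V_k`. -/
def IsChainPoint (G : SimpleGraph V) (Vc : ℕ → Finset V) (k : ℕ) (x : Sym2 V → ℝ) : Prop :=
  x ∈ spanningTreePolytope G ∧
  (∑ e ∈ cut G (Vc 0), x e) = 1 ∧
  (∑ e ∈ cut G (Vc k), x e) = 1 ∧
  (∀ i, 1 ≤ i → i ≤ k - 1 → (∑ e ∈ cut G (Vc i), x e) < 2) ∧
  (∀ i, 1 ≤ i → i ≤ k →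
    (∑ v ∈ level Vc k i, ∑ e ∈ cut G {v}, x e) = 2 * ((level Vc k i).card : ℝ))

/-- A Gao-tree for the chain `V_0 ⊊ … ⊊ V_k`: a spanning tree meeting each cut `δ(V_i)`
in exactly one edge. -/
def IsGaoTree (G : SimpleGraph V) (Vc : ℕ → Finset V) (k : ℕ) (T : Finset (Sym2 V)) : Prop :=
  IsSpanningTree G T ∧ ∀ i ≤ k, (T ∩ cut G (Vc i)).card = 1

/-- A Gao-tree for the subchain of `V_0 ⊊ … ⊊ V_k` given by the index set `I`. -/
def IsGaoTreeOn (G : SimpleGraph V) (Vc : ℕ → Finset V) (I : Finset ℕ)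
    (T : Finset (Sym2 V)) : Prop :=
  IsSpanningTree G T ∧ ∀ i ∈ I, (T ∩ cut G (Vc i)).card = 1

/-- `Sp_𝒞(G)`: the convex hull of characteristic vectors of Gao-trees. -/
noncomputable def gaoPolytope (G : SimpleGraph V) (Vc : ℕ → Finset V) (k : ℕ) :
    Set (Sym2 V → ℝ) :=
  convexHull ℝ {x | ∃ T : Finset (Sym2 V), IsGaoTree G Vc k T ∧ x = chi T}

/-- `F` is the edge set of a spanning tree of the induced subgraph `G(U)`. -/
def IsSpanningTreeOfInduced (G : SimpleGraph V) (U : Finset V) (F : Finset (Sym2 V)) : Prop :=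
  (F : Set (Sym2 V)) ⊆ G.edgeSet ∧ (∀ e ∈ F, ∀ v ∈ e, v ∈ U) ∧
  F.card = U.card - 1 ∧
  ∀ u ∈ U, ∀ v ∈ U, (SimpleGraph.fromEdgeSet (F : Set (Sym2 V))).Reachable u v

/-- The rank of `X` in the cycle matroid of `G`. -/
noncomputable def cycleRank (G : SimpleGraph V) (X : Finset (Sym2 V)) : ℕ :=
  (G.edgeFinset.powerset.filter (fun T => IsSpanningTree G T)).sup (fun T => (T ∩ X).card)

/-- The rank of `X` in the matroid whose bases are the Gao-trees. -/
noncomputable def gaoRank (G : SimpleGraph V) (Vc : ℕ → Finset V) (k : ℕ)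
    (X : Finset (Sym2 V)) : ℕ :=
  (G.edgeFinset.powerset.filter (fun T => IsGaoTree G Vc k T)).sup (fun T => (T ∩ X).card)

/-- `x` is a solution of the `s`–`t` path TSP subtour elimination LP. -/
def IsSubtourLPSolution (G : SimpleGraph V) (s t : V) (x : Sym2 V → ℝ) : Prop :=
  x ∈ spanningTreePolytope G ∧
  (∀ v, v ≠ s → v ≠ t → (∑ e ∈ cut G {v}, x e) = 2) ∧
  (∑ e ∈ cut G {s}, x e) = 1 ∧ (∑ e ∈ cut G {t}, x e) = 1

/-- Rank function of a matroid on a finite ground set, as a function on finsets. -/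
noncomputable def mrank {E : Type*} [Fintype E] (M : Matroid E) (X : Finset E) : ℕ :=
  (X.powerset.filter (fun I : Finset E => M.Indep (I : Set E))).sup Finset.card

/-- Convex hull of characteristic vectors of independent sets of a matroid. -/
noncomputable def indepPolytope {E : Type*} [Fintype E] (M : Matroid E) : Set (E → ℝ) :=
  convexHull ℝ {x | ∃ I : Finset E, M.Indep (I : Set E) ∧
    x = fun e => if e ∈ I then (1 : ℝ) else 0}

/-!
All three identities are linear in `y`, so it suffices to check them at a Gao-tree `T`.
Put `A = V_{i-1} ⊊ B = V_i` and `L = B \ A`. Since `A ⊆ B`, the cut `δ(L)` is the symmetric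
difference of `δ(A)` and `δ(B)`, each of which meets `T` in a single edge; as `T` is connected
it meets `δ(L)`, so these two edges are distinct and `|T ∩ δ(L)| = 2`. A path of `T` between two
vertices of `L` can neither leave `B` nor enter `A`, since it would have to use the unique tree
edge of that cut twice; hence `T` restricted to `L` is a tree with `|L| - 1` edges. The third
identity is the handshake formula `∑_{v ∈ L} y(δ(v)) = 2 y(E(L)) + y(δ(L))`.
-/

namespace SimpleGraph

variable {G H : SimpleGraph V} {S A B : Finset V} {a b : V}

theorem mk_mem_cut_iff : s(a, b) ∈ cut G S ↔ G.Adj a b ∧ (a ∈ S ↔ b ∉ S) := by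
  simp only [cut, cutBetween, mem_filter, mem_edgeFinset, mem_edgeSet, Sym2.eq_iff, mem_compl]
  constructor
  · rintro ⟨hab, u, v, ⟨rfl, rfl⟩ | ⟨rfl, rfl⟩, hu, hv⟩ <;> exact ⟨hab, by tauto⟩
  · rintro ⟨hab, h⟩
    by_cases ha : a ∈ S
    · exact ⟨hab, a, b, .inl ⟨rfl, rfl⟩, ha, h.1 ha⟩
    · exact ⟨hab, b, a, .inr ⟨rfl, rfl⟩, by tauto, ha⟩

theorem mk_mem_inducedEdges_iff : s(a, b) ∈ inducedEdges G S ↔ G.Adj a b ∧ a ∈ S ∧ b ∈ S := by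
  simp [inducedEdges]

theorem cut_compl : cut G Sᶜ = cut G S := by
  ext e
  induction e using Sym2.ind
  simp only [mk_mem_cut_iff, mem_compl]
  tauto

theorem cut_sdiff_of_subset (hAB : A ⊆ B) : cut G (B \ A) = symmDiff (cut G A) (cut G B) := by
  ext e
  induction e using Sym2.ind with
  | _ a b =>
    have := @hAB a
    have := @hAB b
    simp only [mem_symmDiff, mk_mem_cut_iff, mem_sdiff]
    tauto

theorem cut_singleton (v : V) : cut G {v} = {e ∈ G.edgeFinset | v ∈ e} := by
  ext e
  induction e using Sym2.ind with
  | _ a b =>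
    simp only [mk_mem_cut_iff, mem_singleton, mem_filter, mem_edgeFinset, mem_edgeSet,
      Sym2.mem_iff]
    constructor
    · rintro ⟨hab, h⟩
      exact ⟨hab, by tauto⟩
    · rintro ⟨hab, rfl | rfl⟩
      · exact ⟨hab, by simp [hab.ne']⟩
      · exact ⟨hab, by simp [hab.ne]⟩

theorem cut_fromEdgeSet {T : Finset (Sym2 V)} (hT : (T : Set (Sym2 V)) ⊆ G.edgeSet) :
    cut (fromEdgeSet (T : Set (Sym2 V))) S = T ∩ cut G S := by
  ext e
  induction e using Sym2.ind with
  | _ a b =>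
    simp only [mem_inter, mk_mem_cut_iff, fromEdgeSet_adj, mem_coe]
    exact ⟨fun ⟨⟨he, _⟩, h⟩ => ⟨he, hT he, h⟩, fun ⟨he, hab, h⟩ => ⟨⟨he, hab.ne⟩, h⟩⟩

theorem inducedEdges_fromEdgeSet {T : Finset (Sym2 V)} (hT : (T : Set (Sym2 V)) ⊆ G.edgeSet) :
    inducedEdges (fromEdgeSet (T : Set (Sym2 V))) S = T ∩ inducedEdges G S := by
  ext e
  induction e using Sym2.ind with
  | _ a b =>
    simp only [mem_inter, mk_mem_inducedEdges_iff, fromEdgeSet_adj, mem_coe]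
    exact ⟨fun ⟨⟨he, _⟩, h⟩ => ⟨he, hT he, h⟩, fun ⟨he, hab, h⟩ => ⟨⟨he, hab.ne⟩, h⟩⟩

theorem sum_sum_cut_singleton (x : Sym2 V → ℝ) (L : Finset V) :
    ∑ v ∈ L, ∑ e ∈ cut G {v}, x e
      = 2 * ∑ e ∈ inducedEdges G L, x e + ∑ e ∈ cut G L, x e := by
  have hedge : ∀ e ∈ G.edgeFinset, ∑ v ∈ L, (if v ∈ e then x e else 0)
      = 2 * (if e ∈ inducedEdges G L then x e else 0) + (if e ∈ cut G L then x e else 0) := by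
    intro e he
    induction e using Sym2.ind with
    | _ a b =>
      have hab : G.Adj a b := by simpa using he
      have hsplit : ∀ v, (if v ∈ s(a, b) then x s(a, b) else 0)
          = (if a = v then x s(a, b) else 0) + (if b = v then x s(a, b) else 0) := by
        intro v
        by_cases hav : a = v <;> by_cases hbv : b = v
        · exact absurd (hav.trans hbv.symm) hab.ne
        all_goals simp [hav, hbv, Sym2.mem_iff, eq_comm]
      simp only [hsplit, sum_add_distrib, sum_ite_eq, mk_mem_cut_iff, mk_mem_inducedEdges_iff,
        hab, true_and]
      by_cases ha : a ∈ L <;> by_cases hb : b ∈ L <;> simp [ha, hb, two_mul]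
  have hcut : cut G L ⊆ G.edgeFinset := filter_subset _ _
  have hind : inducedEdges G L ⊆ G.edgeFinset := filter_subset _ _
  calc ∑ v ∈ L, ∑ e ∈ cut G {v}, x e
      = ∑ e ∈ G.edgeFinset, ∑ v ∈ L, (if v ∈ e then x e else 0) := by
        simp only [cut_singleton, sum_filter]
        exact sum_comm
    _ = _ := by
        rw [sum_congr rfl hedge, sum_add_distrib, ← mul_sum, ← sum_filter, ← sum_filter,
          filter_mem_eq_inter, filter_mem_eq_inter, inter_eq_right.2 hcut,
          inter_eq_right.2 hind]

theorem nonempty_of_cut_nonempty (h : (cut H S).Nonempty) : S.Nonempty := by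
  obtain ⟨e, he⟩ := h
  induction e using Sym2.ind with
  | _ a b =>
    obtain ⟨-, hab⟩ := mk_mem_cut_iff.1 he
    by_cases ha : a ∈ S
    · exact ⟨a, ha⟩
    · exact ⟨b, by tauto⟩

theorem Connected.cut_nonempty (hH : H.Connected) (hS : S.Nonempty) (hSc : Sᶜ.Nonempty) :
    (cut H S).Nonempty := by
  obtain ⟨u, hu⟩ := hS
  obtain ⟨v, hv⟩ := hSc
  obtain ⟨p⟩ := hH.preconnected u v
  obtain ⟨d, -, hd, hd'⟩ := p.exists_boundary_dart (S : Set V) hu (by simpa using hv)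
  exact ⟨d.edge, mk_mem_cut_iff.2 ⟨d.adj, by simp_all⟩⟩

theorem Walk.IsTrail.support_subset_of_card_cut_le_one {u v : V} {p : H.Walk u v}
    (hp : p.IsTrail) (hS : #(cut H S) ≤ 1) (hu : u ∈ S) (hv : v ∈ S) :
    ∀ w ∈ p.support, w ∈ S := by
  intro w hw
  by_contra hwS
  obtain ⟨d₁, hd₁, hd₁S, hd₁S'⟩ :=
    (p.takeUntil w hw).exists_boundary_dart (S : Set V) hu hwS
  obtain ⟨d₂, hd₂, hd₂S, hd₂S'⟩ :=
    (p.dropUntil w hw).exists_boundary_dart (S : Set V)ᶜ hwS (by simpa using hv)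
  have hd : d₁.edge = d₂.edge := card_le_one.1 hS _
    (mk_mem_cut_iff.2 ⟨d₁.adj, by simp_all⟩) _ (mk_mem_cut_iff.2 ⟨d₂.adj, by simp_all⟩)
  have hnodup := hp.edges_nodup
  rw [← p.take_spec hw, Walk.edges_append] at hnodup
  exact List.disjoint_of_nodup_append hnodup (List.mem_map_of_mem hd₁)
    (hd ▸ List.mem_map_of_mem hd₂)

theorem connected_induce_of_forall_walk {W : Type*} {K : SimpleGraph W} {s : Set W} {u : W}
    (hu : u ∈ s) (h : ∀ v ∈ s, ∃ p : K.Walk u v, ∀ w ∈ p.support, w ∈ s) :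
    (K.induce s).Connected :=
  induce_connected_of_patches u hu fun hv =>
    let ⟨p, hp⟩ := h _ hv
    ⟨_, hp, p.start_mem_support, p.end_mem_support,
      p.connected_induce_support.preconnected _ _⟩

theorem IsAcyclic.card_inducedEdges_add_one {L : Finset V} (hH : H.IsAcyclic)
    (hL : (H.induce (L : Set V)).Connected) : #(inducedEdges H L) + 1 = #L := by
  have := (IsTree.mk hL (hH.induce _)).card_edgeFinset
  rw [← card_filter_edgeFinset_toFinset_subset] at this
  convert this using 2
  · simp [inducedEdges, subset_iff]
  · simp

theorem IsTree.card_cut_sdiff (hH : H.IsTree) (hAB : A ⊂ B) (hA : #(cut H A) = 1)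
    (hB : #(cut H B) = 1) :
    #(cut H (B \ A)) = 2 ∧ #(inducedEdges H (B \ A)) + 1 = #(B \ A) := by
  obtain ⟨e₁, he₁⟩ := card_eq_one.1 hA
  obtain ⟨e₂, he₂⟩ := card_eq_one.1 hB
  have hL : (B \ A).Nonempty := sdiff_nonempty.2 hAB.2
  have hcut : cut H (B \ A) = symmDiff {e₁} {e₂} := he₁ ▸ he₂ ▸ cut_sdiff_of_subset hAB.1
  have hne : e₁ ≠ e₂ := by
    rintro rfl
    have hAne : A.Nonempty := nonempty_of_cut_nonempty (he₁ ▸ singleton_nonempty _)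
    have := hH.connected.cut_nonempty hL (hAne.mono fun a ha => by simp [ha])
    simp [hcut] at this
  refine ⟨by rw [hcut, symmDiff_eq_union (disjoint_singleton.2 hne)]; exact card_pair hne, ?_⟩
  refine hH.isAcyclic.card_inducedEdges_add_one ?_
  obtain ⟨u, hu⟩ := hL
  refine connected_induce_of_forall_walk hu fun v hv => ?_
  obtain ⟨p⟩ := hH.connected.preconnected u v
  have hp := p.bypass_isPath.isTrail
  rw [mem_coe] at hv
  rw [mem_sdiff] at hu hv
  refine ⟨p.bypass, fun w hw => mem_sdiff.2
    ⟨hp.support_subset_of_card_cut_le_one hB.le hu.1 hv.1 w hw, ?_⟩⟩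
  have hAc : #(cut H Aᶜ) ≤ 1 := by rw [cut_compl, hA]
  simpa using hp.support_subset_of_card_cut_le_one hAc (by simpa using hu.2) (by simpa using hv.2)
    w hw

end SimpleGraph

open SimpleGraph

theorem IsSpanningTree.card_cut_sdiff {G : SimpleGraph V} {T : Finset (Sym2 V)}
    {A B : Finset V} (hT : IsSpanningTree G T) (hAB : A ⊂ B) (hA : #(T ∩ cut G A) = 1)
    (hB : #(T ∩ cut G B) = 1) :
    #(T ∩ cut G (B \ A)) = 2 ∧ #(T ∩ inducedEdges G (B \ A)) + 1 = #(B \ A) := by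
  rw [← cut_fromEdgeSet hT.1] at hA hB
  rw [← cut_fromEdgeSet hT.1, ← inducedEdges_fromEdgeSet hT.1]
  exact hT.2.card_cut_sdiff hAB hA hB

theorem sum_chi {α : Type*} (T A : Finset (Sym2 α)) : ∑ e ∈ A, chi T e = #(T ∩ A) := by
  simp only [chi]
  rw [sum_boole, filter_mem_eq_inter, inter_comm]

theorem sum_eq_of_mem_convexHull {ι : Type*} {s : Set (ι → ℝ)} {A : Finset ι} {c : ℝ}
    (h : ∀ x ∈ s, ∑ i ∈ A, x i = c) {y : ι → ℝ} (hy : y ∈ convexHull ℝ s) :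
    ∑ i ∈ A, y i = c :=
  convexHull_min h (convex_hyperplane (f := fun x : ι → ℝ => ∑ i ∈ A, x i)
    ⟨fun x y => by simp [sum_add_distrib], fun a x => by simp [mul_sum]⟩ c) hy

theorem level_eq_sdiff {Vc : ℕ → Finset V} {k i : ℕ} (hi : 1 ≤ i) (hik : i ≤ k) :
    level Vc k i = Vc i \ Vc (i - 1) := by
  rw [level, if_neg (by omega), if_pos hik]

theorem IsGaoTree.card_cut_level {G : SimpleGraph V} {Vc : ℕ → Finset V} {k i : ℕ}
    {T : Finset (Sym2 V)} (hT : IsGaoTree G Vc k T) (hchain : Vc (i - 1) ⊂ Vc i)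
    (hi : 1 ≤ i) (hik : i ≤ k) :
    #(T ∩ cut G (level Vc k i)) = 2 ∧
      #(T ∩ inducedEdges G (level Vc k i)) + 1 = #(level Vc k i) := by
  rw [level_eq_sdiff hi hik]
  exact hT.1.card_cut_sdiff hchain (hT.2 _ (by omega)) (hT.2 _ hik)

theorem stmt17_general (G : SimpleGraph V)
    (Vc : ℕ → Finset V) (k : ℕ)
    (hchain : ∀ i < k, Vc i ⊂ Vc (i + 1))
    (y : Sym2 V → ℝ) (hy : y ∈ gaoPolytope G Vc k) :
    ∀ i, 1 ≤ i → i ≤ k →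
      (∑ e ∈ cut G (level Vc k i), y e) = 2 ∧
      (∑ e ∈ inducedEdges G (level Vc k i), y e) = ((level Vc k i).card : ℝ) - 1 ∧
      (∑ v ∈ level Vc k i, ∑ e ∈ cut G {v}, y e) = 2 * ((level Vc k i).card : ℝ) := by
  intro i hi hik
  have hstep : Vc (i - 1) ⊂ Vc i := by simpa [Nat.sub_add_cancel hi] using hchain (i - 1) (by omega)
  have hcut : ∑ e ∈ cut G (level Vc k i), y e = 2 := by
    refine sum_eq_of_mem_convexHull ?_ hy
    rintro _ ⟨T, hT, rfl⟩
    rw [sum_chi, (hT.card_cut_level hstep hi hik).1, Nat.cast_ofNat]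
  have hind : ∑ e ∈ inducedEdges G (level Vc k i), y e = ((level Vc k i).card : ℝ) - 1 := by
    refine sum_eq_of_mem_convexHull ?_ hy
    rintro _ ⟨T, hT, rfl⟩
    rw [sum_chi, ← (hT.card_cut_level hstep hi hik).2, Nat.cast_add_one, add_sub_cancel_right]
  refine ⟨hcut, hind, ?_⟩
  rw [sum_sum_cut_singleton, hcut, hind]
  ring

theorem stmt17 (G : SimpleGraph V) (hG : G.Connected)
    (Vc : ℕ → Finset V) (k : ℕ)
    (hne : (Vc 0).Nonempty) (hchain : ∀ i < k, Vc i ⊂ Vc (i + 1))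
    (htop : Vc k ⊂ Finset.univ)
    (y : Sym2 V → ℝ) (hy : y ∈ gaoPolytope G Vc k) :
    ∀ i, 1 ≤ i → i ≤ k →
      (∑ e ∈ cut G (level Vc k i), y e) = 2 ∧
      (∑ e ∈ inducedEdges G (level Vc k i), y e) = ((level Vc k i).card : ℝ) - 1 ∧
      (∑ v ∈ level Vc k i, ∑ e ∈ cut G {v}, y e) = 2 * ((level Vc k i).card : ℝ) :=
  stmt17_general G Vc k hchain y hy
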